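/- The intermediate invariant of the bitwise trigger algorithm: after processing a prefix P of the literals of clause C, the i-th bit of allFalse equals (Aᵢ(l) = F for all l in P), and the i-th bit of oneUndef equals (exactly one literal l in P has Aᵢ(l) = U and all other literals of P have Aᵢ(l) = F). -/

import Mathlib

/-- Truth values: True, False, Undef. -/
inductive TV | T | F | U
  deriving DecidableEq, Repr

/-- Negation of a truth value. -/
def TV.neg : TV → TV
  | .T => .F
  | .F => .T
  | .U => .U

/-- A literal over variable type `V`: a variable or its negation. -/
inductive Lit (V : Type) where
  | pos (v : V)
  | neg (v : V)
  deriving DecidableEq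

variable {V : Type}

/-- Evaluation of a literal under an assignment. -/
def Lit.eval (A : V → TV) : Lit V → TV
  | .pos v => A v
  | .neg v => (A v).neg

/-- Evaluation of a literal under an aggregate assignment. -/
def Lit.aeval (G : V → Set TV) : Lit V → Set TV
  | .pos v => G v
  | .neg v => TV.neg '' G v

/-- A clause (list of literals) triggers on an assignment. -/
def triggers (A : V → TV) (C : List (Lit V)) : Prop :=
  (∀ l ∈ C, l.eval A ≠ TV.T) ∧
    C.length - 1 ≤ C.countP (fun l => decide (l.eval A = TV.F))

open Classical in
/-- A clause triggers on an aggregate assignment. -/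
noncomputable def aggTriggers (G : V → Set TV) (C : List (Lit V)) : Prop :=
  (∀ l ∈ C, TV.F ∈ l.aeval G ∨ TV.U ∈ l.aeval G) ∧
    C.length - 1 ≤ C.countP (fun l => decide (TV.F ∈ l.aeval G))

/-- Aggregate assignment associated to a family of assignments. -/
def assocAgg {N : ℕ} (A : Fin N → V → TV) : V → Set TV :=
  fun v => Set.range fun i => A i v

/-- Aggregate assignment associated to a set of assignments. -/
def setAgg (S : Set (V → TV)) : V → Set TV :=
  fun v => (fun A => A v) '' S

/-- One step of the bitwise trigger fold: state is `(allFalse, oneUndef)`. -/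
def bitStep {V : Type} {N : ℕ} (isFalse isSet : Lit V → Fin N → Bool)
    (p : (Fin N → Bool) × (Fin N → Bool)) (l : Lit V) :
    (Fin N → Bool) × (Fin N → Bool) :=
  (fun i => p.1 i && isFalse l i,
   fun i => (p.1 i && !(isSet l i)) || (p.2 i && isFalse l i))

/-- State of the bitwise trigger algorithm after processing a list of literals. -/
def bitState {V : Type} {N : ℕ} (isFalse isSet : Lit V → Fin N → Bool)
    (C : List (Lit V)) : (Fin N → Bool) × (Fin N → Bool) :=
  C.foldl (bitStep isFalse isSet) (fun _ => true, fun _ => false)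

/-- The result of the bitwise trigger algorithm: `allFalse OR oneUndef`. -/
def bitTrigger {V : Type} {N : ℕ} (isFalse isSet : Lit V → Fin N → Bool)
    (C : List (Lit V)) : Fin N → Bool :=
  fun i => (bitState isFalse isSet C).1 i || (bitState isFalse isSet C).2 i

/-!
Induction on the prefix, adding one literal `x` at a time: `P ++ [x]` is all false iff `P` is and
`x` is false, and `P ++ [x]` has exactly one undefined literal (the rest false) iff either `P` is
all false and `x` is undefined, or `P` already has exactly one and `x` is false. These are exactly
the two update rules of `bitStep`, read bitwise.
-/

section

variable {α : Type*} (e : α → TV)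

def AllFalse (P : List α) : Prop :=
  ∀ l ∈ P, e l = .F

def OneUndef (P : List α) : Prop :=
  ∃ l₀ ∈ P, e l₀ = .U ∧ P.countP (fun l => e l = .U) = 1 ∧ ∀ l ∈ P, e l ≠ .U → e l = .F

variable {e}

theorem oneUndef_iff {P : List α} :
    OneUndef e P ↔ P.countP (fun l => e l = .U) = 1 ∧ ∀ l ∈ P, e l ≠ .U → e l = .F := by
  refine ⟨fun ⟨_, _, _, hcount, hrest⟩ => ⟨hcount, hrest⟩, fun ⟨hcount, hrest⟩ => ?_⟩
  have hpos : 0 < P.countP (fun l => e l = .U) := by omega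
  obtain ⟨l₀, hl₀, hU⟩ := List.countP_pos_iff.1 hpos
  exact ⟨l₀, hl₀, of_decide_eq_true hU, hcount, hrest⟩

theorem allFalse_iff {P : List α} :
    AllFalse e P ↔ P.countP (fun l => e l = .U) = 0 ∧ ∀ l ∈ P, e l ≠ .U → e l = .F := by
  simp only [AllFalse, List.countP_eq_zero, decide_eq_true_eq, ← forall₂_and]
  exact forall₂_congr fun l _ => by cases e l <;> simp

theorem allFalse_append_singleton {P : List α} {x : α} :
    AllFalse e (P ++ [x]) ↔ AllFalse e P ∧ e x = .F := by
  simp [AllFalse, or_imp, forall_and]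

theorem oneUndef_append_singleton {P : List α} {x : α} :
    OneUndef e (P ++ [x]) ↔ AllFalse e P ∧ e x = .U ∨ OneUndef e P ∧ e x = .F := by
  rw [oneUndef_iff, oneUndef_iff, allFalse_iff]
  simp only [List.countP_append, List.countP_singleton, List.forall_mem_append,
    List.forall_mem_singleton]
  cases e x <;> simp

end

theorem bitState_nil {V : Type} {N : ℕ} (isFalse isSet : Lit V → Fin N → Bool) :
    bitState isFalse isSet [] = (fun _ => true, fun _ => false) :=
  rfl

theorem bitState_append_singleton {V : Type} {N : ℕ} (isFalse isSet : Lit V → Fin N → Bool)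
    (P : List (Lit V)) (x : Lit V) :
    bitState isFalse isSet (P ++ [x]) = bitStep isFalse isSet (bitState isFalse isSet P) x :=
  List.foldl_append ..

theorem bitState_invariant_general {V : Type} {N : ℕ} (A : Fin N → V → TV)
    (isFalse isSet : Lit V → Fin N → Bool)
    (hFalse : ∀ l i, isFalse l i = decide (Lit.eval (A i) l = TV.F))
    (hSet : ∀ l i, isSet l i = decide (Lit.eval (A i) l ≠ TV.U))
    (P : List (Lit V)) :
    ∀ i : Fin N,
      ((bitState isFalse isSet P).1 i = true ↔ ∀ l ∈ P, Lit.eval (A i) l = TV.F) ∧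
      ((bitState isFalse isSet P).2 i = true ↔
        ∃ l₀ ∈ P, Lit.eval (A i) l₀ = TV.U ∧
          P.countP (fun l => decide (Lit.eval (A i) l = TV.U)) = 1 ∧
          ∀ l ∈ P, Lit.eval (A i) l ≠ TV.U → Lit.eval (A i) l = TV.F) := by
  intro i
  change (_ ↔ AllFalse (Lit.eval (A i)) P) ∧ (_ ↔ OneUndef (Lit.eval (A i)) P)
  induction P using List.reverseRecOn with
  | nil => simp [bitState_nil, AllFalse, OneUndef]
  | append_singleton P x ih =>
    rw [bitState_append_singleton, allFalse_append_singleton, oneUndef_append_singleton,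
      ← ih.1, ← ih.2]
    simp [bitStep, hFalse, hSet]

theorem bitState_invariant {V : Type} {N : ℕ} (A : Fin N → V → TV)
    (isFalse isSet : Lit V → Fin N → Bool)
    (hFalse : ∀ l i, isFalse l i = decide (Lit.eval (A i) l = TV.F))
    (hSet : ∀ l i, isSet l i = decide (Lit.eval (A i) l ≠ TV.U))
    (C P : List (Lit V)) (hP : P <+: C) :
    ∀ i : Fin N,
      ((bitState isFalse isSet P).1 i = true ↔ ∀ l ∈ P, Lit.eval (A i) l = TV.F) ∧
      ((bitState isFalse isSet P).2 i = true ↔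
        ∃ l₀ ∈ P, Lit.eval (A i) l₀ = TV.U ∧
          P.countP (fun l => decide (Lit.eval (A i) l = TV.U)) = 1 ∧
          ∀ l ∈ P, Lit.eval (A i) l ≠ TV.U → Lit.eval (A i) l = TV.F) :=
  bitState_invariant_general A isFalse isSet hFalse hSet P
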